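/- arXiv:1112.1294 — 5 statements merged into one kernel-verified Lean document; each statement's English description precedes it below -/
import Mathlib

section
/- Let H be a finite-dimensional real inner product space and let A, B : H → H be linear, self-adjoint, positive definite operators. If u : [0,T] → H is continuously differentiable and satisfies B u'(t) + A u(t) = f(t) for all t ∈ (0,T], then for all t ∈ [0,T], (A u(t), u(t)) ≤ (A u(0), u(0)) + (1/2) ∫₀ᵗ (B⁻¹ f(θ), f(θ)) dθ. -/
open scoped RealInnerProductSpace

/-!
Along a solution, the energy `E(s) = ⟪A u, u⟫` has derivative `2⟪A u, u'⟫ = 2⟪f, u'⟫ - 2⟪B u', u'⟫`,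
and Young's inequality for the positive form of `B` bounds this by `½ ⟪B⁻¹ f, f⟫`. Integrating the
derivative inequality over `[0, t]` gives the estimate.
-/

section

variable {H : Type*} [NormedAddCommGroup H] [InnerProductSpace ℝ H]

-- Expand `0 ≤ ⟪B (2x - y), 2x - y⟫`.
theorem LinearMap.IsPositive.two_mul_inner_le {B : H →ₗ[ℝ] H} (hB : B.IsPositive) (x y : H) :
    2 * ⟪B y, x⟫ ≤ 2 * ⟪B x, x⟫ + (1 / 2) * ⟪B y, y⟫ := by
  have h := hB.inner_nonneg_left ((2 : ℝ) • x - y)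
  have hxy : ⟪B x, y⟫ = ⟪B y, x⟫ := by rw [hB.isSymmetric, real_inner_comm]
  simp only [map_sub, map_smul, inner_sub_left, inner_sub_right, real_inner_smul_left,
    real_inner_smul_right] at h
  linarith

theorem two_mul_inner_le_of_add_eq {B Binv : H →ₗ[ℝ] H} (hB : B.IsPositive)
    (hBinv : B ∘ₗ Binv = LinearMap.id) {x v w : H} (heq : B x + v = w) :
    2 * ⟪v, x⟫ ≤ (1 / 2) * ⟪Binv w, w⟫ := by
  have hw : B (Binv w) = w := LinearMap.congr_fun hBinv w
  have hv : v = B (Binv w) - B x := by rw [hw, ← heq, add_sub_cancel_left]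
  have hdual : ⟪Binv w, w⟫ = ⟪B (Binv w), Binv w⟫ := by rw [hw, real_inner_comm]
  rw [hv, hdual, inner_sub_left]
  linarith [hB.two_mul_inner_le x (Binv w)]

theorem HasDerivAt.inner_map_self [CompleteSpace H] {A : H →ₗ[ℝ] H} (hA : A.IsSymmetric)
    {u : ℝ → H} {u' : H} {t : ℝ} (hu : HasDerivAt u u' t) :
    HasDerivAt (fun s => ⟪A (u s), u s⟫) (2 * ⟪A (u t), u'⟫) t := by
  let A' : H →L[ℝ] H := ⟨A, hA.continuous⟩
  have hAu : HasDerivAt (fun s => A (u s)) (A u') t := A'.hasFDerivAt.comp_hasDerivAt t hu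
  refine (hAu.inner ℝ hu).congr_deriv ?_
  rw [hA u', real_inner_comm u', two_mul]

end

theorem stmt0_general {H : Type*} [NormedAddCommGroup H] [InnerProductSpace ℝ H]
    [FiniteDimensional ℝ H]
    (A B Binv : H →ₗ[ℝ] H)
    (hAsym : A.IsSymmetric)
    (hBsym : B.IsSymmetric) (hBpos : ∀ x : H, x ≠ 0 → 0 < ⟪B x, x⟫)
    (hBinv₁ : B ∘ₗ Binv = LinearMap.id)
    (T : ℝ)
    (u u' f : ℝ → H)
    (hu : ∀ t ∈ Set.Icc (0:ℝ) T, HasDerivAt u (u' t) t)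
    (hf : ContinuousOn f (Set.Icc (0:ℝ) T))
    (heq : ∀ t ∈ Set.Ioc (0:ℝ) T, B (u' t) + A (u t) = f t) :
    ∀ t ∈ Set.Icc (0:ℝ) T,
      ⟪A (u t), u t⟫ ≤ ⟪A (u 0), u 0⟫
        + (1/2) * ∫ θ in (0:ℝ)..t, ⟪Binv (f θ), f θ⟫ := by
  intro t ⟨ht0, htT⟩
  have hB : B.IsPositive := (B.isPositive_iff).2 ⟨hBsym, fun x => by
    rcases eq_or_ne x 0 with rfl | hx
    · simp
    · exact (hBpos x hx).le⟩
  have hsub : Set.Icc 0 t ⊆ Set.Icc 0 T := Set.Icc_subset_Icc_right htT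
  have hE : ∀ s ∈ Set.Icc 0 t, HasDerivAt (fun s => ⟪A (u s), u s⟫) (2 * ⟪A (u s), u' s⟫) s :=
    fun s hs => (hu s (hsub hs)).inner_map_self hAsym
  have hdual : ContinuousOn (fun θ => (1 / 2) * ⟪Binv (f θ), f θ⟫) (Set.Icc 0 t) :=
    continuousOn_const.mul
      (((Binv.continuous_of_finiteDimensional.comp_continuousOn hf).inner hf).mono hsub)
  have hbound := intervalIntegral.sub_le_integral_of_hasDeriv_right_of_le ht0
    (fun s hs => (hE s hs).continuousAt.continuousWithinAt)
    (fun s hs => (hE s (Set.Ioo_subset_Icc_self hs)).hasDerivWithinAt)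
    hdual.integrableOn_Icc
    (fun s hs => two_mul_inner_le_of_add_eq hB hBinv₁ (heq s ⟨hs.1, hs.2.le.trans htT⟩))
  rw [intervalIntegral.integral_const_mul] at hbound
  linarith

/-- A priori energy estimate for the continuous problem B u' + A u = f. -/
theorem stmt0 {H : Type*} [NormedAddCommGroup H] [InnerProductSpace ℝ H]
    [FiniteDimensional ℝ H]
    (A B Binv : H →ₗ[ℝ] H)
    (hAsym : A.IsSymmetric) (hApos : ∀ x : H, x ≠ 0 → 0 < ⟪A x, x⟫)
    (hBsym : B.IsSymmetric) (hBpos : ∀ x : H, x ≠ 0 → 0 < ⟪B x, x⟫)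
    (hBinv₁ : B ∘ₗ Binv = LinearMap.id) (hBinv₂ : Binv ∘ₗ B = LinearMap.id)
    (T : ℝ) (hT : 0 < T)
    (u u' f : ℝ → H)
    (hu : ∀ t ∈ Set.Icc (0:ℝ) T, HasDerivAt u (u' t) t)
    (hu' : ContinuousOn u' (Set.Icc (0:ℝ) T))
    (hf : ContinuousOn f (Set.Icc (0:ℝ) T))
    (heq : ∀ t ∈ Set.Ioc (0:ℝ) T, B (u' t) + A (u t) = f t) :
    ∀ t ∈ Set.Icc (0:ℝ) T,
      ⟪A (u t), u t⟫ ≤ ⟪A (u 0), u 0⟫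
        + (1/2) * ∫ θ in (0:ℝ)..t, ⟪Binv (f θ), f θ⟫ :=
  stmt0_general A B Binv hAsym hBsym hBpos hBinv₁ T u u' f hu hf heq
end

section
/- Let H be a finite-dimensional real inner product space, A, B self-adjoint positive definite linear operators on H, τ > 0, σ ≥ 1/2, and suppose y⁺, y, φ ∈ H satisfy B (y⁺ − y)/τ + A(σ y⁺ + (1−σ) y) = φ. Then (A y⁺, y⁺) ≤ (A y, y) + (τ/2) (G⁻¹ φ, φ), where G = B + (σ − 1/2) τ A. -/
open scoped RealInnerProductSpace

/-- Theorem 1: stability of the weighted two-level scheme, one step. -/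
theorem stmt1 {H : Type*} [NormedAddCommGroup H] [InnerProductSpace ℝ H]
    [FiniteDimensional ℝ H]
    (A B Ginv : H →ₗ[ℝ] H)
    (hAsym : A.IsSymmetric) (hApos : ∀ x : H, x ≠ 0 → 0 < ⟪A x, x⟫)
    (hBsym : B.IsSymmetric) (hBpos : ∀ x : H, x ≠ 0 → 0 < ⟪B x, x⟫)
    (τ σ : ℝ) (hτ : 0 < τ) (hσ : 1/2 ≤ σ)
    (hGinv₁ : (B + ((σ - 1/2) * τ) • A) ∘ₗ Ginv = LinearMap.id)
    (hGinv₂ : Ginv ∘ₗ (B + ((σ - 1/2) * τ) • A) = LinearMap.id)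
    (y' y φ : H)
    (hscheme : τ⁻¹ • B (y' - y) + A (σ • y' + (1 - σ) • y) = φ) :
    ⟪A y', y'⟫ ≤ ⟪A y, y⟫ + (τ / 2) * ⟪Ginv φ, φ⟫ := by
  set G := B + ((σ - 1/2) * τ) • A with hG
  have hGsym : G.IsSymmetric := by
    intro x z
    simp only [hG, LinearMap.add_apply, LinearMap.smul_apply, inner_add_left, inner_add_right,
      real_inner_smul_left, real_inner_smul_right, hAsym x z, hBsym x z]
  have hGpos : ∀ x : H, 0 ≤ ⟪G x, x⟫ := by
    intro x
    rcases eq_or_ne x 0 with h | h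
    · simp [h]
    · have h1 := hBpos x h
      have h2 := hApos x h
      have h3 : 0 ≤ (σ - 1/2) * τ := mul_nonneg (by linarith) hτ.le
      simp only [hG, LinearMap.add_apply, LinearMap.smul_apply, inner_add_left,
        real_inner_smul_left]
      nlinarith
  have hGG : G (Ginv φ) = φ := LinearMap.ext_iff.mp hGinv₁ φ
  set d := y' - y with hd
  have hscheme2 : G d + (τ/2) • A (y' + y) = τ • φ := by
    have h1 : G d + (τ/2) • A (y' + y)
        = τ • (τ⁻¹ • B (y' - y) + A (σ • y' + (1 - σ) • y)) := by
      simp only [hG, hd, LinearMap.add_apply, LinearMap.smul_apply, map_sub, map_add, map_smul,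
        smul_sub, smul_add, smul_smul]
      match_scalars <;> field_simp <;> ring
    rw [h1, hscheme]
  have e1 : ⟪G d, d⟫ + (τ/2) * ⟪A (y' + y), d⟫ = τ * ⟪φ, d⟫ := by
    have := congrArg (fun z => ⟪z, d⟫) hscheme2
    simpa [inner_add_left, real_inner_smul_left, mul_add] using this
  have e2 : ⟪A (y' + y), d⟫ = ⟪A y', y'⟫ - ⟪A y, y⟫ := by
    have hc : ⟪A y, y'⟫ = ⟪A y', y⟫ := by
      rw [hAsym y y', real_inner_comm]
    simp only [hd, map_add, inner_add_left, inner_sub_right]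
    linarith
  have hu := hGpos ((2:ℝ) • d - τ • Ginv φ)
  have hsy : ⟪G d, Ginv φ⟫ = ⟪φ, d⟫ := by
    rw [hGsym d (Ginv φ), hGG, real_inner_comm]
  have hsy2 : ⟪φ, Ginv φ⟫ = ⟪Ginv φ, φ⟫ := real_inner_comm _ _
  have e3 : ⟪G ((2:ℝ) • d - τ • Ginv φ), (2:ℝ) • d - τ • Ginv φ⟫
      = 4 * ⟪G d, d⟫ - 4 * τ * ⟪φ, d⟫ + τ^2 * ⟪Ginv φ, φ⟫ := by
    simp only [map_sub, map_smul, inner_sub_left, inner_sub_right, real_inner_smul_left,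
      real_inner_smul_right, hGG, hsy, hsy2]
    ring
  rw [e3] at hu
  rw [e2] at e1
  nlinarith [mul_pos hτ hτ, hτ]
end

section
/- Let H be a finite-dimensional real inner product space, B = B* > 0, A₁ linear with adjoint A₂ = A₁*, A = A₁ + A₂ self-adjoint positive definite. Let σ ≥ 1/2, τ > 0, B̃ = (B+στA₁)B⁻¹(B+στA₂), and suppose y⁺, y, φ ∈ H satisfy B̃(y⁺−y)/τ + Ay = φ. Then (Ay⁺, y⁺) ≤ (Ay, y) + (τ/2)(G⁻¹φ, φ), where G = B + (σ−1/2)τA + σ²τ² A₁B⁻¹A₂. -/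
open scoped RealInnerProductSpace

/-- Theorem 2: stability of the factorized (alternating-triangular) scheme, one step. -/
theorem stmt4 {H : Type*} [NormedAddCommGroup H] [InnerProductSpace ℝ H]
    [FiniteDimensional ℝ H]
    (B Binv A₁ : H →ₗ[ℝ] H)
    (hBsym : B.IsSymmetric) (hBpos : ∀ x : H, x ≠ 0 → 0 < ⟪B x, x⟫)
    (hBinv₁ : B ∘ₗ Binv = LinearMap.id) (hBinv₂ : Binv ∘ₗ B = LinearMap.id)
    (A₂ : H →ₗ[ℝ] H) (hA₂ : A₂ = LinearMap.adjoint A₁)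
    (A : H →ₗ[ℝ] H) (hA : A = A₁ + A₂)
    (hAsym : A.IsSymmetric) (hApos : ∀ x : H, x ≠ 0 → 0 < ⟪A x, x⟫)
    (σ τ : ℝ) (hσ : 1/2 ≤ σ) (hτ : 0 < τ)
    (Bt : H →ₗ[ℝ] H)
    (hBt : Bt = (B + (σ * τ) • A₁) ∘ₗ Binv ∘ₗ (B + (σ * τ) • A₂))
    (G Ginv : H →ₗ[ℝ] H)
    (hG : G = B + ((σ - 1/2) * τ) • A + (σ ^ 2 * τ ^ 2) • (A₁ ∘ₗ Binv ∘ₗ A₂))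
    (hGinv₁ : G ∘ₗ Ginv = LinearMap.id) (hGinv₂ : Ginv ∘ₗ G = LinearMap.id)
    (y' y φ : H)
    (hscheme : τ⁻¹ • Bt (y' - y) + A y = φ) :
    ⟪A y', y'⟫ ≤ ⟪A y, y⟫ + (τ / 2) * ⟪Ginv φ, φ⟫ := by
  have hB1 : ∀ x, B (Binv x) = x := fun x => LinearMap.congr_fun hBinv₁ x
  have hB2 : ∀ x, Binv (B x) = x := fun x => LinearMap.congr_fun hBinv₂ x
  have hG1 : ∀ x, G (Ginv x) = x := fun x => LinearMap.congr_fun hGinv₁ x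
  have hA₂' : ∀ x z : H, ⟪A₂ x, z⟫ = ⟪x, A₁ z⟫ := by
    intro x z; rw [hA₂, LinearMap.adjoint_inner_left]
  have hBnn : ∀ x : H, 0 ≤ ⟪B x, x⟫ := by
    intro x
    rcases eq_or_ne x 0 with h | h
    · simp [h]
    · exact (hBpos x h).le
  have hAnn : ∀ x : H, 0 ≤ ⟪A x, x⟫ := by
    intro x
    rcases eq_or_ne x 0 with h | h
    · simp [h]
    · exact (hApos x h).le
  have hBinvsym : ∀ x z : H, ⟪Binv x, z⟫ = ⟪x, Binv z⟫ := by
    intro x z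
    calc ⟪Binv x, z⟫ = ⟪Binv x, B (Binv z)⟫ := by rw [hB1]
      _ = ⟪B (Binv x), Binv z⟫ := (hBsym (Binv x) (Binv z)).symm
      _ = ⟪x, Binv z⟫ := by rw [hB1]
  have hBinvnn : ∀ z : H, 0 ≤ ⟪Binv z, z⟫ := by
    intro z
    calc (0:ℝ) ≤ ⟪B (Binv z), Binv z⟫ := hBnn _
      _ = ⟪z, Binv z⟫ := by rw [hB1]
      _ = ⟪Binv z, z⟫ := real_inner_comm _ _
  have hTsym : ∀ x z : H, ⟪A₁ (Binv (A₂ x)), z⟫ = ⟪x, A₁ (Binv (A₂ z))⟫ := by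
    intro x z
    calc ⟪A₁ (Binv (A₂ x)), z⟫ = ⟪z, A₁ (Binv (A₂ x))⟫ := real_inner_comm _ _
      _ = ⟪A₂ z, Binv (A₂ x)⟫ := (hA₂' z _).symm
      _ = ⟪Binv (A₂ x), A₂ z⟫ := real_inner_comm _ _
      _ = ⟪A₂ x, Binv (A₂ z)⟫ := hBinvsym _ _
      _ = ⟪x, A₁ (Binv (A₂ z))⟫ := hA₂' _ _
  have hTnn : ∀ x : H, 0 ≤ ⟪A₁ (Binv (A₂ x)), x⟫ := by
    intro x
    calc (0:ℝ) ≤ ⟪Binv (A₂ x), A₂ x⟫ := hBinvnn _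
      _ = ⟪A₂ x, Binv (A₂ x)⟫ := real_inner_comm _ _
      _ = ⟪x, A₁ (Binv (A₂ x))⟫ := hA₂' _ _
      _ = ⟪A₁ (Binv (A₂ x)), x⟫ := real_inner_comm _ _
  have hGapp : ∀ x : H, G x = B x + ((σ - 1/2) * τ) • A x
      + (σ ^ 2 * τ ^ 2) • A₁ (Binv (A₂ x)) := by
    intro x; rw [hG]; simp [LinearMap.add_apply, LinearMap.smul_apply, LinearMap.comp_apply]
  have hGsym : ∀ x z : H, ⟪G x, z⟫ = ⟪x, G z⟫ := by
    intro x z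
    rw [hGapp, hGapp]
    simp only [inner_add_left, inner_add_right, real_inner_smul_left, real_inner_smul_right]
    rw [hBsym, hAsym, hTsym]
  have hGnn : ∀ x : H, 0 ≤ ⟪G x, x⟫ := by
    intro x
    rw [hGapp]
    simp only [inner_add_left, real_inner_smul_left]
    have h1 : 0 ≤ (σ - 1/2) * τ := mul_nonneg (by linarith) hτ.le
    have h2 : 0 ≤ σ ^ 2 * τ ^ 2 := by positivity
    have := hBnn x; have := hAnn x; have := hTnn x
    nlinarith [mul_nonneg h1 (hAnn x), mul_nonneg h2 (hTnn x)]
  have hBtG : ∀ x : H, Bt x = G x + (τ/2) • A x := by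
    intro x
    rw [hBt, hGapp, hA]
    simp only [LinearMap.comp_apply, LinearMap.add_apply, LinearMap.smul_apply,
      map_add, map_smul, hB1, hB2]
    module
  set w := y' - y with hw
  clear_value w
  have hy' : y' = y + w := by rw [hw]; abel
  have hBtw : Bt w = τ • (φ - A y) := by
    have h1 : τ⁻¹ • Bt w = φ - A y := by rw [← hscheme]; abel
    calc Bt w = τ • (τ⁻¹ • Bt w) := by
          rw [smul_smul, mul_inv_cancel₀ hτ.ne', one_smul]
      _ = τ • (φ - A y) := by rw [h1]
  have e1 : ⟪Bt w, w⟫ = τ * ⟪φ, w⟫ - τ * ⟪A y, w⟫ := by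
    rw [hBtw]; rw [real_inner_smul_left, inner_sub_left]; ring
  have e2 : ⟪Bt w, w⟫ = ⟪G w, w⟫ + (τ/2) * ⟪A w, w⟫ := by
    rw [hBtG]; rw [inner_add_left, real_inner_smul_left]
  have expand : ⟪A y', y'⟫ = ⟪A y, y⟫ + 2 * ⟪A y, w⟫ + ⟪A w, w⟫ := by
    have hwy : ⟪A w, y⟫ = ⟪A y, w⟫ := by rw [hAsym w y, real_inner_comm]
    rw [hy', map_add, inner_add_left, inner_add_right, inner_add_right, hwy]
    ring
  -- positivity of G on v = w - (τ/2) • Ginv φ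
  have key : 0 ≤ ⟪G w, w⟫ - τ * ⟪φ, w⟫ + (τ^2/4) * ⟪Ginv φ, φ⟫ := by
    have h0 := hGnn (w - (τ/2) • Ginv φ)
    have hexp : ⟪G (w - (τ/2) • Ginv φ), w - (τ/2) • Ginv φ⟫
        = ⟪G w, w⟫ - τ * ⟪φ, w⟫ + (τ^2/4) * ⟪Ginv φ, φ⟫ := by
      rw [map_sub, map_smul, inner_sub_left, inner_sub_right, inner_sub_right,
        real_inner_smul_left, real_inner_smul_left, real_inner_smul_right,
        real_inner_smul_right, hG1]
      have h1 : ⟪G w, Ginv φ⟫ = ⟪φ, w⟫ := by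
        calc ⟪G w, Ginv φ⟫ = ⟪w, G (Ginv φ)⟫ := hGsym _ _
          _ = ⟪w, φ⟫ := by rw [hG1]
          _ = ⟪φ, w⟫ := real_inner_comm _ _
      have h2 : ⟪φ, w⟫ = ⟪φ, w⟫ := rfl
      have h3 : ⟪φ, Ginv φ⟫ = ⟪Ginv φ, φ⟫ := real_inner_comm _ _
      rw [h1, h3]
      ring
    linarith [hexp ▸ h0]
  have hGww : ⟪G w, w⟫ = τ * ⟪φ, w⟫ - τ * ⟪A y, w⟫ - (τ/2) * ⟪A w, w⟫ := by
    linarith [e1, e2]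
  rw [expand]
  nlinarith [key, hGww, hτ, mul_pos hτ hτ]
end

section
/- Let H be a finite-dimensional real inner product space and C₁ a linear operator with adjoint C₂ = C₁*, and let A be self-adjoint with C₁ + C₂ = B + στA where B, A are self-adjoint positive definite, σ ≥ 1, τ > 0, ε > 0. Define D = (τ/(2ε))(C₁C₂ + ε²I) and R = D − (τ²/4)A. Then R is self-adjoint and positive definite. -/
open scoped RealInnerProductSpace

/-- For `σ ≥ 1` the operator `R = D - (τ²/4)A` is self-adjoint and positive definite. -/
theorem stmt7 {H : Type*} [NormedAddCommGroup H] [InnerProductSpace ℝ H]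
    [FiniteDimensional ℝ H]
    (C₁ C₂ A B : H →ₗ[ℝ] H)
    (hC₂ : C₂ = LinearMap.adjoint C₁)
    (hAsym : A.IsSymmetric) (hApos : ∀ x : H, x ≠ 0 → 0 < ⟪A x, x⟫)
    (hBsym : B.IsSymmetric) (hBpos : ∀ x : H, x ≠ 0 → 0 < ⟪B x, x⟫)
    (σ τ ε : ℝ) (hσ : 1 ≤ σ) (hτ : 0 < τ) (hε : 0 < ε)
    (hsplit : C₁ + C₂ = B + (σ * τ) • A)
    (D R : H →ₗ[ℝ] H)
    (hD : D = (τ / (2 * ε)) • (C₁ ∘ₗ C₂ + ε ^ 2 • LinearMap.id))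
    (hR : R = D - (τ ^ 2 / 4) • A) :
    R.IsSymmetric ∧ ∀ x : H, x ≠ 0 → 0 < ⟪R x, x⟫ := by
  subst hC₂ hD hR
  set C₂ := LinearMap.adjoint C₁ with hC₂
  constructor
  · intro x y
    simp only [LinearMap.sub_apply, LinearMap.smul_apply, LinearMap.add_apply,
      LinearMap.comp_apply, LinearMap.id_apply, inner_sub_left, inner_sub_right,
      real_inner_smul_left, real_inner_smul_right]
    rw [hAsym x y]
    have h1 : ⟪C₁ (C₂ x), y⟫ = ⟪x, C₁ (C₂ y)⟫ := by
      rw [← LinearMap.adjoint_inner_right C₁ (C₂ x) y, ← hC₂,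
        hC₂, LinearMap.adjoint_inner_left C₁, ← hC₂]
    simp only [inner_add_left, inner_add_right, real_inner_smul_left,
      real_inner_smul_right, h1, real_inner_comm x y]
  · intro x hx
    have a := hApos x hx
    have b := hBpos x hx
    have hc : 2 * ⟪C₂ x, x⟫ = ⟪B x, x⟫ + σ * τ * ⟪A x, x⟫ := by
      have := congrArg (fun T : H →ₗ[ℝ] H => ⟪T x, x⟫) hsplit
      simp only [LinearMap.add_apply, LinearMap.smul_apply, inner_add_left,
        real_inner_smul_left] at this
      have h1 : ⟪C₁ x, x⟫ = ⟪C₂ x, x⟫ := by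
        rw [hC₂, LinearMap.adjoint_inner_left, real_inner_comm]
      linarith [this]
    have key : 2 * ε * ⟪C₂ x, x⟫ ≤ ‖C₂ x‖ ^ 2 + ε ^ 2 * ‖x‖ ^ 2 := by
      have h := sq_nonneg ‖C₂ x - ε • x‖
      rw [norm_sub_sq_real, norm_smul, real_inner_smul_right] at h
      simp only [Real.norm_eq_abs, mul_pow, sq_abs] at h
      nlinarith
    have hnorm : ⟪C₁ (C₂ x), x⟫ = ‖C₂ x‖ ^ 2 := by
      rw [← LinearMap.adjoint_inner_right C₁, ← hC₂, real_inner_self_eq_norm_sq]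
    simp only [LinearMap.sub_apply, LinearMap.smul_apply, LinearMap.add_apply,
      LinearMap.comp_apply, LinearMap.id_apply, inner_sub_left, inner_add_left,
      real_inner_smul_left, hnorm, real_inner_self_eq_norm_sq]
    have hε' : (0:ℝ) < 2 * ε := by linarith
    have h2 : τ / (2 * ε) * (2 * ε * ⟪C₂ x, x⟫) ≤
        τ / (2 * ε) * (‖C₂ x‖ ^ 2 + ε ^ 2 * ‖x‖ ^ 2) := by
      apply mul_le_mul_of_nonneg_left key (by positivity)
    have h3 : τ / (2 * ε) * (2 * ε * ⟪C₂ x, x⟫) = τ * ⟪C₂ x, x⟫ := by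
      field_simp
    nlinarith [mul_pos hτ a, mul_pos (mul_pos hτ hτ) a]
end

section
/- Let H be a finite-dimensional real inner product space, C, R, A self-adjoint operators on H with C > 0, R ≥ 0, A > 0, and τ > 0. Suppose y⁺, y, y⁻, φ ∈ H satisfy C(y⁺−y⁻)/(2τ) + D(y⁺−2y+y⁻)/τ² + Ay = φ with D = R + (τ²/4)A. Define v⁺ = (y⁺+y)/2, v = (y+y⁻)/2, w⁺ = (y⁺−y)/τ, w = (y−y⁻)/τ, and E(v,w) = (Av,v)+(Rw,w). Then E(v⁺,w⁺) ≤ E(v,w) + (τ/2)(C⁻¹φ, φ). -/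
open scoped RealInnerProductSpace

/-- Energy estimate for one step of the three-level scheme
`C(y⁺−y⁻)/(2τ) + D(y⁺−2y+y⁻)/τ² + Ay = φ` with `D = R + (τ²/4)A`. -/
theorem stmt9 {H : Type*} [NormedAddCommGroup H] [InnerProductSpace ℝ H]
    [FiniteDimensional ℝ H]
    (C Cinv R A : H →ₗ[ℝ] H)
    (hCsym : C.IsSymmetric) (hCpos : ∀ x : H, x ≠ 0 → 0 < ⟪C x, x⟫)
    (hCinv₁ : C ∘ₗ Cinv = LinearMap.id) (hCinv₂ : Cinv ∘ₗ C = LinearMap.id)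
    (hRsym : R.IsSymmetric) (hRnonneg : ∀ x : H, 0 ≤ ⟪R x, x⟫)
    (hAsym : A.IsSymmetric) (hApos : ∀ x : H, x ≠ 0 → 0 < ⟪A x, x⟫)
    (τ : ℝ) (hτ : 0 < τ)
    (yp y ym φ : H)
    (hscheme :
      (1 / (2 * τ)) • C (yp - ym) +
        (1 / τ ^ 2) • (R (yp - 2 • y + ym) + (τ ^ 2 / 4) • A (yp - 2 • y + ym)) +
        A y = φ) :
    ⟪A ((1/2 : ℝ) • (yp + y)), (1/2 : ℝ) • (yp + y)⟫ +
      ⟪R (τ⁻¹ • (yp - y)), τ⁻¹ • (yp - y)⟫ ≤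
    ⟪A ((1/2 : ℝ) • (y + ym)), (1/2 : ℝ) • (y + ym)⟫ +
      ⟪R (τ⁻¹ • (y - ym)), τ⁻¹ • (y - ym)⟫ + (τ / 2) * ⟪Cinv φ, φ⟫ := by
  have hτ' : τ ≠ 0 := ne_of_gt hτ
  have hCC : C (Cinv φ) = φ := by
    have := congrArg (fun f : H →ₗ[ℝ] H => f φ) hCinv₁
    simpa using this
  have hCnn : ∀ z : H, 0 ≤ ⟪C z, z⟫ := by
    intro z
    rcases eq_or_ne z 0 with h | h
    · simp [h]
    · exact (hCpos z h).le
  have hCS : ∀ x : H, 2 * ⟪φ, x⟫ ≤ ⟪C x, x⟫ + ⟪Cinv φ, φ⟫ := by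
    intro x
    have h0 := hCnn (x - Cinv φ)
    have h1 : ⟪C x, Cinv φ⟫ = ⟪φ, x⟫ := by
      rw [hCsym x (Cinv φ), hCC]; exact real_inner_comm φ x
    have h2 : ⟪C (Cinv φ), x⟫ = ⟪φ, x⟫ := by rw [hCC]
    have h3 : ⟪C (Cinv φ), Cinv φ⟫ = ⟪Cinv φ, φ⟫ := by
      rw [hCC, real_inner_comm]
    rw [map_sub, inner_sub_left, inner_sub_right, inner_sub_right, h1, h2, h3] at h0
    linarith
  have hCS2 := hCS (τ⁻¹ • (yp - ym))
  rw [map_smul, real_inner_smul_left, real_inner_smul_right, real_inner_smul_right] at hCS2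
  -- final CS bound
  have hfin : ⟪φ, yp - ym⟫ - 1 / (2 * τ) * ⟪C (yp - ym), yp - ym⟫
      ≤ τ / 2 * ⟪Cinv φ, φ⟫ := by
    set a := ⟪φ, yp - ym⟫
    set c := ⟪C (yp - ym), yp - ym⟫
    set q := ⟪Cinv φ, φ⟫
    have h4 := mul_le_mul_of_nonneg_left hCS2 (le_of_lt hτ)
    have h5 : τ * (2 * (τ⁻¹ * a)) = 2 * a := by field_simp
    have h6 : τ * (τ⁻¹ * (τ⁻¹ * c) + q) = τ⁻¹ * c + τ * q := by field_simp
    rw [h5, h6] at h4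
    have h7 : 1 / (2 * τ) * c = (τ⁻¹ * c) / 2 := by ring
    linarith
  -- symmetry facts
  have sA1 : ⟪A y, yp⟫ = ⟪A yp, y⟫ := by rw [hAsym y yp, real_inner_comm]
  have sA2 : ⟪A ym, yp⟫ = ⟪A yp, ym⟫ := by rw [hAsym ym yp, real_inner_comm]
  have sA3 : ⟪A ym, y⟫ = ⟪A y, ym⟫ := by rw [hAsym ym y, real_inner_comm]
  have sR1 : ⟪R y, yp⟫ = ⟪R yp, y⟫ := by rw [hRsym y yp, real_inner_comm]
  have sR2 : ⟪R ym, yp⟫ = ⟪R yp, ym⟫ := by rw [hRsym ym yp, real_inner_comm]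
  have sR3 : ⟪R ym, y⟫ = ⟪R y, ym⟫ := by rw [hRsym ym y, real_inner_comm]
  have sC1 : ⟪C y, yp⟫ = ⟪C yp, y⟫ := by rw [hCsym y yp, real_inner_comm]
  have sC2 : ⟪C ym, yp⟫ = ⟪C yp, ym⟫ := by rw [hCsym ym yp, real_inner_comm]
  have sC3 : ⟪C ym, y⟫ = ⟪C y, ym⟫ := by rw [hCsym ym y, real_inner_comm]
  -- pair scheme with yp - ym
  have hip : ⟪φ, yp - ym⟫ =
      (1 / (2 * τ)) * ⟪C (yp - ym), yp - ym⟫ +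
      (1 / τ ^ 2) * (⟪R (yp - 2 • y + ym), yp - ym⟫ +
        (τ ^ 2 / 4) * ⟪A (yp - 2 • y + ym), yp - ym⟫) +
      ⟪A y, yp - ym⟫ := by
    rw [← hscheme]
    simp [inner_add_left, inner_sub_left, real_inner_smul_left]
    ring
  -- energy difference identity
  have hkey :
      (⟪A ((1/2 : ℝ) • (yp + y)), (1/2 : ℝ) • (yp + y)⟫ +
        ⟪R (τ⁻¹ • (yp - y)), τ⁻¹ • (yp - y)⟫) -
      (⟪A ((1/2 : ℝ) • (y + ym)), (1/2 : ℝ) • (y + ym)⟫ +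
        ⟪R (τ⁻¹ • (y - ym)), τ⁻¹ • (y - ym)⟫) =
      ⟪φ, yp - ym⟫ - 1 / (2 * τ) * ⟪C (yp - ym), yp - ym⟫ := by
    rw [hip]
    simp only [two_smul, map_add, map_sub, map_smul, inner_add_left, inner_add_right,
      inner_sub_left, inner_sub_right, real_inner_smul_left, real_inner_smul_right]
    simp only [sA1, sA2, sA3, sR1, sR2, sR3, sC1, sC2, sC3]
    field_simp
    ring
  linarith
end
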